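/- arXiv:2002.07784 — 3 statements merged into one kernel-verified Lean document; each statement's English description precedes it below -/
import Mathlib

section
/- Let Q be a nonempty finite set of points in R^d with centroid μ, C a finite nonempty set of centers, and β ≥ 0. If cost(Q, C) > (β+1) * cost(Q, μ), then for every c ∈ C we have ||c - μ||² > (β/|Q|) * cost(Q, μ). -/
/-! Expanding `‖q - c‖² = ‖(q - μ) + (μ - c)‖²` and summing over `Q`, the cross terms cancel
because the deviations from the centroid sum to zero, so `cost(Q, c) = cost(Q, μ) + |Q| ‖μ - c‖²`.
Since `cost(Q, C) ≤ cost(Q, c)` for every `c ∈ C`, the hypothesis forces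
`|Q| ‖μ - c‖² > β cost(Q, μ)`. -/

open Finset

theorem Finset.sum_sub_centroid_eq_zero {K E ι : Type*} [DivisionRing K] [CharZero K]
    [AddCommGroup E] [Module K E] {s : Finset ι} (hs : s.Nonempty) (p : ι → E) :
    ∑ i ∈ s, (p i - (#s : K)⁻¹ • ∑ j ∈ s, p j) = 0 := by
  rw [sum_sub_distrib, sum_const, ← Nat.cast_smul_eq_nsmul K, smul_smul,
    mul_inv_cancel₀ (Nat.cast_ne_zero.mpr hs.card_ne_zero), one_smul, sub_self]

theorem Finset.sum_norm_sub_sq_eq_sum_norm_sub_centroid_sq_add {E : Type*}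
    [NormedAddCommGroup E] [InnerProductSpace ℝ E] {Q : Finset E} (hQ : Q.Nonempty) (c : E) :
    ∑ q ∈ Q, ‖q - c‖ ^ 2 = ∑ q ∈ Q, ‖q - (#Q : ℝ)⁻¹ • ∑ q ∈ Q, q‖ ^ 2
      + #Q * ‖(#Q : ℝ)⁻¹ • ∑ q ∈ Q, q - c‖ ^ 2 := by
  set μ := (#Q : ℝ)⁻¹ • ∑ q ∈ Q, q
  calc ∑ q ∈ Q, ‖q - c‖ ^ 2
      = ∑ q ∈ Q, (‖q - μ‖ ^ 2 + 2 * inner ℝ (q - μ) (μ - c) + ‖μ - c‖ ^ 2) := by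
        refine sum_congr rfl fun q _ => ?_
        rw [← norm_add_sq_real, sub_add_sub_cancel]
    _ = ∑ q ∈ Q, ‖q - μ‖ ^ 2 + 2 * inner ℝ (∑ q ∈ Q, (q - μ)) (μ - c)
          + #Q * ‖μ - c‖ ^ 2 := by
        rw [sum_add_distrib, sum_add_distrib, sum_inner, sum_const, nsmul_eq_mul, ← mul_sum]
    _ = ∑ q ∈ Q, ‖q - μ‖ ^ 2 + #Q * ‖μ - c‖ ^ 2 := by
        rw [show ∑ q ∈ Q, (q - μ) = 0 from sum_sub_centroid_eq_zero hQ id, inner_zero_left,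
          mul_zero, add_zero]

theorem stmt_2_general (d : ℕ) (Q C : Finset (EuclideanSpace ℝ (Fin d)))
    (hQ : Q.Nonempty) (hC : C.Nonempty) (β : ℝ)
    (μ : EuclideanSpace ℝ (Fin d)) (hμ : μ = (Q.card : ℝ)⁻¹ • ∑ q ∈ Q, q)
    (hcost : ∑ q ∈ Q, (C.inf' hC fun c => ‖q - c‖ ^ 2)
        > (β + 1) * ∑ q ∈ Q, ‖q - μ‖ ^ 2) :
    ∀ c ∈ C, ‖c - μ‖ ^ 2 > (β / (Q.card : ℝ)) * ∑ q ∈ Q, ‖q - μ‖ ^ 2 := by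
  intro c hc
  have hcard : (0 : ℝ) < #Q := Nat.cast_pos.mpr hQ.card_pos
  have key :
      (β + 1) * ∑ q ∈ Q, ‖q - μ‖ ^ 2 < ∑ q ∈ Q, ‖q - μ‖ ^ 2 + #Q * ‖c - μ‖ ^ 2 :=
    calc (β + 1) * ∑ q ∈ Q, ‖q - μ‖ ^ 2
        < ∑ q ∈ Q, (C.inf' hC fun c => ‖q - c‖ ^ 2) := hcost
      _ ≤ ∑ q ∈ Q, ‖q - c‖ ^ 2 := sum_le_sum fun q _ => inf'_le _ hc
      _ = ∑ q ∈ Q, ‖q - μ‖ ^ 2 + #Q * ‖c - μ‖ ^ 2 := by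
        rw [hμ, sum_norm_sub_sq_eq_sum_norm_sub_centroid_sq_add hQ, norm_sub_rev]
  rw [gt_iff_lt, div_mul_eq_mul_div, div_lt_iff₀ hcard]
  linarith

theorem stmt_2 (d : ℕ) (Q C : Finset (EuclideanSpace ℝ (Fin d)))
    (hQ : Q.Nonempty) (hC : C.Nonempty) (β : ℝ) (hβ : 0 ≤ β)
    (μ : EuclideanSpace ℝ (Fin d)) (hμ : μ = (Q.card : ℝ)⁻¹ • ∑ q ∈ Q, q)
    (hcost : ∑ q ∈ Q, (C.inf' hC fun c => ‖q - c‖ ^ 2)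
        > (β + 1) * ∑ q ∈ Q, ‖q - μ‖ ^ 2) :
    ∀ c ∈ C, ‖c - μ‖ ^ 2 > (β / (Q.card : ℝ)) * ∑ q ∈ Q, ‖q - μ‖ ^ 2 :=
  stmt_2_general d Q C hQ hC β μ hμ hcost
end

section
/- Let P be a finite set of points partitioned into clusters Q_1, ..., Q_k with centroids μ_1, ..., μ_k, and let C be a finite set of centers with cost(P, C) = α * Σ_i cost(Q_i, μ_i) for some α > 0. Fix β ≥ 1. If a point p ∈ P is sampled with probability proportional to cost(p, C) = min_{c∈C}||p - c||², then with probability at least 1 - β/α, the sampled point p belongs to a cluster Q_i with cost(Q_i, C) ≥ β * cost(Q_i, μ_i). -/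
/- D²-sampling hits a badly approximated cluster with probability ≥ 1 - β/α.
The sampling probability of p is cost(p,C)/cost(P,C), so the probability of the
event is formalized as the D² mass of the good points over the total mass. -/
open Classical in
theorem stmt_3 (d k : ℕ) (P C : Finset (EuclideanSpace ℝ (Fin d)))
    (hC : C.Nonempty)
    (Q : Fin k → Finset (EuclideanSpace ℝ (Fin d)))
    (hpart : ∀ p ∈ P, ∃! i : Fin k, p ∈ Q i)
    (hsub : ∀ i : Fin k, Q i ⊆ P)
    (μ : Fin k → EuclideanSpace ℝ (Fin d))
    (hμ : ∀ i, μ i = ((Q i).card : ℝ)⁻¹ • ∑ q ∈ Q i, q)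
    (α β : ℝ) (hα : 0 < α) (hβ : 1 ≤ β)
    (hcost : ∑ p ∈ P, (C.inf' hC fun c => ‖p - c‖ ^ 2)
        = α * ∑ i : Fin k, ∑ q ∈ Q i, ‖q - μ i‖ ^ 2) :
    (∑ p ∈ P.filter (fun p => ∃ i : Fin k, p ∈ Q i ∧
        β * ∑ q ∈ Q i, ‖q - μ i‖ ^ 2 ≤ ∑ q ∈ Q i, (C.inf' hC fun c => ‖q - c‖ ^ 2)),
      (C.inf' hC fun c => ‖p - c‖ ^ 2))
      ≥ (1 - β / α) * ∑ p ∈ P, (C.inf' hC fun c => ‖p - c‖ ^ 2) := by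
  set f : EuclideanSpace ℝ (Fin d) → ℝ := fun p => C.inf' hC fun c => ‖p - c‖ ^ 2 with hf
  have hf0 : ∀ p, 0 ≤ f p := fun p => Finset.le_inf' hC _ (fun b _ => by positivity)
  set good : EuclideanSpace ℝ (Fin d) → Prop := fun p => ∃ i : Fin k, p ∈ Q i ∧
      β * ∑ q ∈ Q i, ‖q - μ i‖ ^ 2 ≤ ∑ q ∈ Q i, f q with hgood
  have hsplit : ∑ p ∈ P.filter good, f p + ∑ p ∈ P.filter (fun p => ¬ good p), f p
      = ∑ p ∈ P, f p := Finset.sum_filter_add_sum_filter_not P good f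
  set OPT : ℝ := ∑ i : Fin k, ∑ q ∈ Q i, ‖q - μ i‖ ^ 2 with hOPT
  have hOPTi : ∀ i, (0:ℝ) ≤ ∑ q ∈ Q i, ‖q - μ i‖ ^ 2 := fun i =>
    Finset.sum_nonneg fun q _ => by positivity
  set bad : Finset (Fin k) := Finset.univ.filter
      (fun i => ∑ q ∈ Q i, f q < β * ∑ q ∈ Q i, ‖q - μ i‖ ^ 2) with hbad
  have hQdisj : ∀ i ∈ bad, ∀ j ∈ bad, i ≠ j → Disjoint (Q i) (Q j) := by
    intro i _ j _ hij
    rw [Finset.disjoint_left]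
    intro q hqi hqj
    obtain ⟨m, _, hu⟩ := hpart q (hsub i hqi)
    exact hij ((hu i hqi).trans (hu j hqj).symm)
  have hsubB : P.filter (fun p => ¬ good p) ⊆ bad.biUnion Q := by
    intro p hp
    rw [Finset.mem_filter] at hp
    obtain ⟨hpP, hng⟩ := hp
    obtain ⟨i, hi, _⟩ := hpart p hpP
    rw [Finset.mem_biUnion]
    refine ⟨i, ?_, hi⟩
    rw [hbad, Finset.mem_filter]
    refine ⟨Finset.mem_univ _, ?_⟩
    by_contra h
    exact hng ⟨i, hi, le_of_not_gt h⟩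
  have hbadle : ∑ p ∈ P.filter (fun p => ¬ good p), f p ≤ β * OPT := by
    calc ∑ p ∈ P.filter (fun p => ¬ good p), f p
        ≤ ∑ p ∈ bad.biUnion Q, f p :=
          Finset.sum_le_sum_of_subset_of_nonneg hsubB (fun p _ _ => hf0 p)
      _ = ∑ i ∈ bad, ∑ q ∈ Q i, f q := Finset.sum_biUnion hQdisj
      _ ≤ ∑ i ∈ bad, β * ∑ q ∈ Q i, ‖q - μ i‖ ^ 2 :=
          Finset.sum_le_sum fun i hi => le_of_lt (Finset.mem_filter.mp hi).2
      _ ≤ ∑ i : Fin k, β * ∑ q ∈ Q i, ‖q - μ i‖ ^ 2 :=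
          Finset.sum_le_sum_of_subset_of_nonneg (Finset.subset_univ _)
            (fun i _ _ => mul_nonneg (le_trans zero_le_one hβ) (hOPTi i))
      _ = β * OPT := by rw [hOPT, Finset.mul_sum]
  have hkey : (1 - β / α) * ∑ p ∈ P, f p = ∑ p ∈ P, f p - β * OPT := by
    rw [hcost]
    field_simp
  rw [hkey]
  linarith
end

section
/- Let Q be a nonempty finite set of points in R^d with centroid μ and let C be a finite set of centers with cost(Q, C) ≥ β * cost(Q, μ) for some β ≥ 4. If a point p ∈ Q is sampled with probability proportional to cost(p, C) (among points of Q), then with probability at least 1 - 6/√β, the sampled point satisfies ||p - μ||² ≤ ((β-1)/|Q|) * cost(Q, μ). -/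
/- D²-sampling within a costly cluster lands near the centroid with probability
at least 1 - 6/√β. The probability of sampling p ∈ Q is cost(p,C)/cost(Q,C), so
the event's probability is the D² mass of the near points over cost(Q,C). -/
set_option maxHeartbeats 2000000 in
open Classical in
theorem stmt_4 (d : ℕ) (Q C : Finset (EuclideanSpace ℝ (Fin d)))
    (hQ : Q.Nonempty) (hC : C.Nonempty) (β : ℝ) (hβ : 4 ≤ β)
    (μ : EuclideanSpace ℝ (Fin d)) (hμ : μ = (Q.card : ℝ)⁻¹ • ∑ q ∈ Q, q)
    (hcost : β * ∑ q ∈ Q, ‖q - μ‖ ^ 2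
        ≤ ∑ q ∈ Q, (C.inf' hC fun c => ‖q - c‖ ^ 2)) :
    (∑ p ∈ Q.filter (fun p =>
        ‖p - μ‖ ^ 2 ≤ ((β - 1) / (Q.card : ℝ)) * ∑ q ∈ Q, ‖q - μ‖ ^ 2),
      (C.inf' hC fun c => ‖p - c‖ ^ 2))
      ≥ (1 - 6 / Real.sqrt β) * ∑ q ∈ Q, (C.inf' hC fun c => ‖q - c‖ ^ 2) := by
  clear hμ
  set D : EuclideanSpace ℝ (Fin d) → ℝ := fun p => C.inf' hC fun c => ‖p - c‖ ^ 2 with hD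
  set Δ : ℝ := ∑ q ∈ Q, ‖q - μ‖ ^ 2 with hΔdef
  set T : ℝ := ∑ q ∈ Q, D q with hTdef
  set P : EuclideanSpace ℝ (Fin d) → Prop :=
    fun p => ‖p - μ‖ ^ 2 ≤ ((β - 1) / (Q.card : ℝ)) * Δ with hP
  have hDnn : ∀ p, 0 ≤ D p := fun p => Finset.le_inf' hC _ (fun c _ => sq_nonneg _)
  have hTnn : 0 ≤ T := Finset.sum_nonneg fun q _ => hDnn q
  have hΔnn : 0 ≤ Δ := Finset.sum_nonneg fun q _ => sq_nonneg _
  have hr0 : (0:ℝ) < Real.sqrt β := Real.sqrt_pos.mpr (by linarith)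
  set r : ℝ := Real.sqrt β with hrdef
  have hrsq : r ^ 2 = β := Real.sq_sqrt (by linarith)
  have hr2 : (2:ℝ) ≤ r := by
    have h4 : Real.sqrt 4 = 2 := by
      rw [show (4:ℝ) = 2 ^ 2 by norm_num, Real.sqrt_sq (by norm_num)]
    calc (2:ℝ) = Real.sqrt 4 := h4.symm
      _ ≤ r := Real.sqrt_le_sqrt hβ
  set s : ℝ := ∑ p ∈ Q.filter (fun p => ¬ P p), D p with hsdef
  have hsnn : 0 ≤ s := Finset.sum_nonneg fun q _ => hDnn q
  have key : (∑ p ∈ Q.filter P, D p) + s = T := Finset.sum_filter_add_sum_filter_not Q P D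
  -- main claim
  have main : s ≤ 6 / r * T := by
    by_cases hΔ0 : Δ = 0
    · have hsum0 : ∑ q ∈ Q, ‖q - μ‖ ^ 2 = 0 := by rw [← hΔdef]; exact hΔ0
      have hall : ∀ p ∈ Q, P p := by
        intro p hp
        have h0 : ‖p - μ‖ ^ 2 = 0 :=
          (Finset.sum_eq_zero_iff_of_nonneg (fun q _ => sq_nonneg (‖q - μ‖))).mp hsum0 p hp
        simp only [hP, h0, hΔ0, mul_zero, le_refl]
      have hemp : Q.filter (fun p => ¬ P p) = ∅ := by
        apply Finset.filter_eq_empty_iff.mpr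
        intro p hp hnp; exact hnp (hall p hp)
      rw [hsdef, hemp, Finset.sum_empty]
      exact mul_nonneg (div_nonneg (by norm_num) hr0.le) hTnn
    have hΔpos : 0 < Δ := lt_of_le_of_ne hΔnn (Ne.symm hΔ0)
    have hn : (0:ℝ) < (Q.card : ℝ) := by
      exact_mod_cast Finset.card_pos.mpr hQ
    set n : ℝ := (Q.card : ℝ) with hndef
    set δ : ℝ := C.inf' hC fun c => ‖μ - c‖ with hδdef
    have hδnn : 0 ≤ δ := Finset.le_inf' hC _ (fun c _ => norm_nonneg _)
    -- D q ≤ 2‖q-μ‖² + 2δ²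
    obtain ⟨c₀, hc₀, hc₀eq⟩ := C.exists_mem_eq_inf' hC (fun c => ‖μ - c‖)
    have h3 : ∀ q, D q ≤ 2 * ‖q - μ‖ ^ 2 + 2 * δ ^ 2 := by
      intro q
      have h1 : D q ≤ ‖q - c₀‖ ^ 2 := Finset.inf'_le _ hc₀
      have h2 : ‖q - c₀‖ ≤ ‖q - μ‖ + ‖μ - c₀‖ := by
        calc ‖q - c₀‖ = ‖(q - μ) + (μ - c₀)‖ := by rw [sub_add_sub_cancel]
          _ ≤ ‖q - μ‖ + ‖μ - c₀‖ := norm_add_le _ _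
      have hδe : δ = ‖μ - c₀‖ := hc₀eq
      nlinarith [norm_nonneg (q - μ), norm_nonneg (μ - c₀), sq_nonneg (‖q - μ‖ - ‖μ - c₀‖), norm_nonneg (q - c₀)]
    -- δ² ≤ 2 D q + 2‖q-μ‖²
    have h4 : ∀ q, δ ^ 2 ≤ 2 * D q + 2 * ‖q - μ‖ ^ 2 := by
      intro q
      obtain ⟨c, hcmem, hceq⟩ := C.exists_mem_eq_inf' hC (fun c => ‖q - c‖ ^ 2)
      have h1 : δ ≤ ‖μ - c‖ := Finset.inf'_le _ hcmem
      have h2 : ‖μ - c‖ ≤ ‖μ - q‖ + ‖q - c‖ := by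
        calc ‖μ - c‖ = ‖(μ - q) + (q - c)‖ := by rw [sub_add_sub_cancel]
          _ ≤ ‖μ - q‖ + ‖q - c‖ := norm_add_le _ _
      have h5 : ‖μ - q‖ = ‖q - μ‖ := norm_sub_rev _ _
      have h6 : D q = ‖q - c‖ ^ 2 := hceq
      nlinarith [norm_nonneg (q - μ), norm_nonneg (q - c), sq_nonneg (‖q - μ‖ - ‖q - c‖), hδnn]
    have hsumδ : n * δ ^ 2 ≤ 2 * T + 2 * Δ := by
      have hsum : ∑ _q ∈ Q, δ ^ 2 ≤ ∑ q ∈ Q, (2 * D q + 2 * ‖q - μ‖ ^ 2) :=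
        Finset.sum_le_sum (fun q _ => h4 q)
      rw [Finset.sum_const, nsmul_eq_mul] at hsum
      have heq : ∑ q ∈ Q, (2 * D q + 2 * ‖q - μ‖ ^ 2) = 2 * T + 2 * Δ := by
        rw [Finset.sum_add_distrib, ← Finset.mul_sum, ← Finset.mul_sum, hTdef, hΔdef]
      rw [heq] at hsum
      exact hsum
    set m : ℝ := ((Q.filter (fun p => ¬ P p)).card : ℝ) with hmdef
    have hm0 : 0 ≤ m := by positivity
    have hbadnorm : ∑ p ∈ Q.filter (fun p => ¬ P p), ‖p - μ‖ ^ 2 ≤ Δ :=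
      Finset.sum_le_sum_of_subset_of_nonneg (Finset.filter_subset _ _)
        (fun q _ _ => sq_nonneg _)
    have hMarkov : m * ((β - 1) / n * Δ) ≤ Δ := by
      have hlb : ∀ p ∈ Q.filter (fun p => ¬ P p), (β - 1) / n * Δ ≤ ‖p - μ‖ ^ 2 := by
        intro p hp
        have h := (Finset.mem_filter.mp hp).2
        simp only [hP] at h
        exact le_of_lt (lt_of_not_ge h)
      have hc := Finset.card_nsmul_le_sum (Q.filter (fun p => ¬ P p))
        (fun p => ‖p - μ‖ ^ 2) ((β - 1) / n * Δ) hlb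
      rw [nsmul_eq_mul] at hc
      exact le_trans hc hbadnorm
    clear_value r s n δ m T Δ D
    have hn' : n ≠ 0 := ne_of_gt hn
    have hMarkov2 : m * (β - 1) * Δ ≤ n * Δ := by
      have h := mul_le_mul_of_nonneg_right hMarkov hn.le
      calc m * (β - 1) * Δ = m * ((β - 1) / n * Δ) * n := by field_simp
        _ ≤ Δ * n := h
        _ = n * Δ := mul_comm _ _
    have hm : m * (β - 1) ≤ n := le_of_mul_le_mul_right hMarkov2 hΔpos
    -- bad sum bound
    have hs1 : s ≤ 2 * Δ + 2 * m * δ ^ 2 := by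
      have h1 : s ≤ ∑ p ∈ Q.filter (fun p => ¬ P p), (2 * ‖p - μ‖ ^ 2 + 2 * δ ^ 2) := by
        rw [hsdef]; exact Finset.sum_le_sum (fun q _ => h3 q)
      have h2 : ∑ p ∈ Q.filter (fun p => ¬ P p), (2 * ‖p - μ‖ ^ 2 + 2 * δ ^ 2)
          = 2 * (∑ p ∈ Q.filter (fun p => ¬ P p), ‖p - μ‖ ^ 2) + m * (2 * δ ^ 2) := by
        rw [Finset.sum_add_distrib, ← Finset.mul_sum, Finset.sum_const, nsmul_eq_mul, hmdef]
      nlinarith [hbadnorm, hδnn, hm0]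
    have hns : n * s ≤ 2 * n * Δ + 4 * m * T + 4 * m * Δ := by
      nlinarith [mul_le_mul_of_nonneg_left hs1 hn.le, mul_le_mul_of_nonneg_left hsumδ hm0]
    have hstep2 : n * (s * (β - 1)) ≤ n * (2 * (β - 1) * Δ + 4 * T + 4 * Δ) := by
      nlinarith [mul_le_mul_of_nonneg_left hns (by linarith : (0:ℝ) ≤ β - 1),
        mul_le_mul_of_nonneg_right hm hTnn, mul_le_mul_of_nonneg_right hm hΔnn]
    have hstep3 : s * (β - 1) ≤ 2 * (β - 1) * Δ + 4 * T + 4 * Δ :=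
      le_of_mul_le_mul_left hstep2 hn
    have hA : s * ((β - 1) * β) ≤ (6 * β + 2) * T := by
      nlinarith [mul_le_mul_of_nonneg_right hstep3 (by linarith : (0:ℝ) ≤ β),
        mul_le_mul_of_nonneg_left hcost (by linarith : (0:ℝ) ≤ 2 * β + 2), hTnn]
    have hApoly : 0 ≤ (6 * r ^ 2 + 2) * T - s * ((r ^ 2 - 1) * r ^ 2) := by
      rw [hrsq]; linarith
    have hpoly : (0:ℝ) ≤ 6 * r ^ 4 - 6 * r ^ 3 - 6 * r ^ 2 - 2 * r := by
      nlinarith [hr2, sq_nonneg (r - 2), mul_nonneg (mul_nonneg (by linarith : (0:ℝ) ≤ r - 2) (by linarith : (0:ℝ) ≤ r)) (by linarith : (0:ℝ) ≤ r)]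
    have hfin : s * r ≤ 6 * T := by
      nlinarith [mul_nonneg hr0.le hApoly, mul_nonneg hTnn hpoly,
        (show (0:ℝ) < r ^ 4 - r ^ 2 by nlinarith [hr2]), hsnn]
    rw [div_mul_eq_mul_div, le_div_iff₀ hr0]
    linarith
  linarith
end
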